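/- Let γ, σ > 0, Λ(κ) := ( √(κ²+4) − κ ) / 2, and define the insider's ex-ante profit W(κ) := (γσ/2)·( κ·log(κΛ(κ)) + 2Λ(κ) ) for κ > 0. Then W is differentiable with W'(κ) = (γσ/2)·log(1 − Λ(κ)²) < 0, W is convex with W''(κ) = −γσ·Λ'(κ)/κ > 0, W is strictly decreasing, and W(κ) → 0 as κ → ∞. -/

import Mathlib

/-!
Everything rests on the quadratic relation `Λ² + κΛ = 1`, i.e. `κΛ = 1 − Λ²`. Differentiating it
gives `Λ' (κ + 2Λ) = −Λ`, and with this the terms of `W'` coming from `Λ'` cancel (an envelope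
theorem), leaving `W' = (γσ/2) log(κΛ) = (γσ/2) log(1 − Λ²)`. Since `Λ` decreases, `W'` increases,
so `W` is convex. For the limit, `log(κΛ) ≥ 1 − 1/(κΛ)` squeezes the bracket of `W` between `Λ` and
`2Λ ≤ 2/κ`.
-/

open Real Set Filter

noncomputable section

/-- `Λ(κ) = (√(κ²+4) − κ)/2`, the normalised Kyle lambda. -/
def Lam (κ : ℝ) : ℝ := (Real.sqrt (κ ^ 2 + 4) - κ) / 2

/-- The insider's ex-ante profit `W(κ) = (γσ/2)(κ log(κΛ(κ)) + 2Λ(κ))`. -/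
def Wprofit (γ σ κ : ℝ) : ℝ :=
  γ * σ / 2 * (κ * Real.log (κ * Lam κ) + 2 * Lam κ)

theorem sqrt_sq_add_four_eq (κ : ℝ) : √(κ ^ 2 + 4) = κ + 2 * Lam κ := by
  simp only [Lam]; ring

theorem Lam_sq_add_mul_Lam (κ : ℝ) : Lam κ ^ 2 + κ * Lam κ = 1 := by
  have hs : √(κ ^ 2 + 4) ^ 2 = κ ^ 2 + 4 := sq_sqrt (by positivity)
  simp only [Lam]; linear_combination hs / 4

theorem one_sub_Lam_sq (κ : ℝ) : 1 - Lam κ ^ 2 = κ * Lam κ := by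
  linear_combination -Lam_sq_add_mul_Lam κ

theorem Lam_pos (κ : ℝ) : 0 < Lam κ := by
  have : |κ| < √(κ ^ 2 + 4) := by
    rw [← sqrt_sq_eq_abs]; exact sqrt_lt_sqrt (sq_nonneg κ) (by linarith)
  simp only [Lam]; linarith [le_abs_self κ]

theorem Lam_lt_one {κ : ℝ} (hκ : 0 < κ) : Lam κ < 1 := by
  nlinarith [Lam_sq_add_mul_Lam κ, Lam_pos κ]

theorem Lam_le_inv {κ : ℝ} (hκ : 0 < κ) : Lam κ ≤ κ⁻¹ := by
  rw [← one_div, le_div_iff₀ hκ]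
  nlinarith [Lam_sq_add_mul_Lam κ]

theorem hasDerivAt_Lam (κ : ℝ) : HasDerivAt Lam (-Lam κ / (κ + 2 * Lam κ)) κ := by
  have hsqrt : HasDerivAt (fun x => √(x ^ 2 + 4)) (2 * κ / (2 * √(κ ^ 2 + 4))) κ :=
    (((hasDerivAt_pow 2 κ).add_const 4).sqrt (by positivity)).congr_deriv (by ring)
  refine ((hsqrt.sub (hasDerivAt_id' κ)).div_const 2).congr_deriv ?_
  have hs : 0 < √(κ ^ 2 + 4) := by positivity
  rw [← sqrt_sq_add_four_eq]
  simp only [Lam]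
  field_simp
  ring

theorem deriv_Lam_neg (κ : ℝ) : deriv Lam κ < 0 := by
  rw [(hasDerivAt_Lam κ).deriv, ← sqrt_sq_add_four_eq]
  exact div_neg_of_neg_of_pos (neg_neg_of_pos (Lam_pos κ)) (by positivity)

theorem hasDerivAt_Wprofit (γ σ : ℝ) {κ : ℝ} (hκ : 0 < κ) :
    HasDerivAt (Wprofit γ σ) (γ * σ / 2 * log (1 - Lam κ ^ 2)) κ := by
  have hΛ := Lam_pos κ
  have hΛ' := hasDerivAt_Lam κ
  have hlog := ((hasDerivAt_id' κ).fun_mul hΛ').log (by positivity)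
  have hW := (((hasDerivAt_id' κ).fun_mul hlog).add (hΛ'.const_mul 2)).const_mul (γ * σ / 2)
  refine hW.congr_deriv ?_
  rw [one_sub_Lam_sq]
  field_simp
  ring

theorem log_one_sub_Lam_sq_neg {κ : ℝ} (hκ : 0 < κ) : log (1 - Lam κ ^ 2) < 0 := by
  have hΛ := Lam_pos κ
  have hΛ1 := Lam_lt_one hκ
  exact log_neg (by nlinarith) (by nlinarith)

theorem Wprofit_deriv_neg {γ σ κ : ℝ} (hγσ : 0 < γ * σ) (hκ : 0 < κ) :
    γ * σ / 2 * log (1 - Lam κ ^ 2) < 0 :=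
  mul_neg_of_pos_of_neg (by positivity) (log_one_sub_Lam_sq_neg hκ)

theorem hasDerivAt_log_one_sub_Lam_sq {κ : ℝ} (hκ : 0 < κ) :
    HasDerivAt (fun x => log (1 - Lam x ^ 2)) (-(2 * deriv Lam κ) / κ) κ := by
  have hΛ := Lam_pos κ
  have hΛ' := (hasDerivAt_Lam κ).differentiableAt.hasDerivAt
  have h := ((hΛ'.fun_pow 2).const_sub 1).log (by rw [one_sub_Lam_sq]; positivity)
  convert h using 1
  rw [one_sub_Lam_sq]
  field_simp
  ring

theorem deriv_Wprofit_eventuallyEq (γ σ : ℝ) {κ : ℝ} (hκ : 0 < κ) :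
    deriv (Wprofit γ σ) =ᶠ[nhds κ] fun x => γ * σ / 2 * log (1 - Lam x ^ 2) := by
  filter_upwards [Ioi_mem_nhds hκ] with x hx
  exact (hasDerivAt_Wprofit γ σ hx).deriv

theorem hasDerivAt_deriv_Wprofit (γ σ : ℝ) {κ : ℝ} (hκ : 0 < κ) :
    HasDerivAt (deriv (Wprofit γ σ)) (-(γ * σ * deriv Lam κ) / κ) κ := by
  refine (((hasDerivAt_log_one_sub_Lam_sq hκ).const_mul (γ * σ / 2)).congr_of_eventuallyEq
    (deriv_Wprofit_eventuallyEq γ σ hκ)).congr_deriv ?_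
  ring

theorem Wprofit_deriv2_pos {γ σ κ : ℝ} (hγσ : 0 < γ * σ) (hκ : 0 < κ) :
    0 < -(γ * σ * deriv Lam κ) / κ :=
  div_pos (neg_pos.2 (mul_neg_of_pos_of_neg hγσ (deriv_Lam_neg κ))) hκ

theorem Lam_le_mul_log_add_two_mul_Lam {κ : ℝ} (hκ : 0 < κ) :
    Lam κ ≤ κ * log (κ * Lam κ) + 2 * Lam κ := by
  have hΛ := Lam_pos κ
  have hlog := one_sub_inv_le_log_of_pos (mul_pos hκ hΛ)
  have hκlog : κ * (1 - (κ * Lam κ)⁻¹) = -Lam κ := by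
    field_simp
    linear_combination Lam_sq_add_mul_Lam κ
  linarith [mul_le_mul_of_nonneg_left hlog hκ.le]

theorem mul_log_add_two_mul_Lam_le {κ : ℝ} (hκ : 0 < κ) :
    κ * log (κ * Lam κ) + 2 * Lam κ ≤ 2 * Lam κ := by
  have hlog : log (κ * Lam κ) ≤ 0 := by
    rw [← one_sub_Lam_sq]
    exact (log_one_sub_Lam_sq_neg hκ).le
  nlinarith

theorem tendsto_Lam_atTop : Tendsto Lam atTop (nhds 0) :=
  squeeze_zero' (.of_forall fun κ => (Lam_pos κ).le)
    (eventually_gt_atTop 0 |>.mono fun _ hκ => Lam_le_inv hκ) tendsto_inv_atTop_zero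

theorem tendsto_Wprofit_atTop (γ σ : ℝ) : Tendsto (Wprofit γ σ) atTop (nhds 0) := by
  have hbracket : Tendsto (fun κ => κ * log (κ * Lam κ) + 2 * Lam κ) atTop (nhds 0) := by
    refine squeeze_zero' ?_ ?_ (by simpa using tendsto_Lam_atTop.const_mul 2)
    · filter_upwards [eventually_gt_atTop 0] with κ hκ
      exact (Lam_pos κ).le.trans (Lam_le_mul_log_add_two_mul_Lam hκ)
    · filter_upwards [eventually_gt_atTop 0] with κ hκ
      exact mul_log_add_two_mul_Lam_le hκ
  have hW := hbracket.const_mul (γ * σ / 2)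
  rwa [mul_zero] at hW

theorem continuousOn_Wprofit (γ σ : ℝ) : ContinuousOn (Wprofit γ σ) (Ioi 0) := fun _ hκ =>
  (hasDerivAt_Wprofit γ σ hκ).continuousAt.continuousWithinAt

theorem convexOn_Wprofit {γ σ : ℝ} (hγσ : 0 ≤ γ * σ) : ConvexOn ℝ (Ioi 0) (Wprofit γ σ) := by
  refine convexOn_of_hasDerivWithinAt2_nonneg (f' := deriv (Wprofit γ σ))
    (f'' := fun κ => -(γ * σ * deriv Lam κ) / κ) (convex_Ioi 0) (continuousOn_Wprofit γ σ)
    ?_ ?_ ?_ <;> rw [interior_Ioi] <;> intro κ hκ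
  · exact (hasDerivAt_Wprofit γ σ hκ).differentiableAt.hasDerivAt.hasDerivWithinAt
  · exact (hasDerivAt_deriv_Wprofit γ σ hκ).hasDerivWithinAt
  · exact div_nonneg (neg_nonneg.2 (mul_nonpos_of_nonneg_of_nonpos hγσ (deriv_Lam_neg κ).le))
      (le_of_lt hκ)

theorem strictAntiOn_Wprofit {γ σ : ℝ} (hγσ : 0 < γ * σ) :
    StrictAntiOn (Wprofit γ σ) (Ioi 0) := by
  refine strictAntiOn_of_hasDerivWithinAt_neg (convex_Ioi 0) (continuousOn_Wprofit γ σ)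
    (f' := fun κ => γ * σ / 2 * log (1 - Lam κ ^ 2)) ?_ ?_ <;> rw [interior_Ioi] <;> intro κ hκ
  · exact (hasDerivAt_Wprofit γ σ hκ).hasDerivWithinAt
  · exact Wprofit_deriv_neg hγσ hκ

/-- `W` is differentiable with `W'(κ) = (γσ/2) log(1 − Λ(κ)²) < 0`, convex with
`W''(κ) = −γσΛ'(κ)/κ > 0`, strictly decreasing on `(0,∞)`, and `W(κ) → 0` as `κ → ∞`. -/
theorem stmt17 (γ σ : ℝ) (hγ : 0 < γ) (hσ : 0 < σ) :
    (∀ κ : ℝ, 0 < κ →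
      HasDerivAt (Wprofit γ σ) (γ * σ / 2 * Real.log (1 - Lam κ ^ 2)) κ ∧
      γ * σ / 2 * Real.log (1 - Lam κ ^ 2) < 0) ∧
    (∀ κ : ℝ, 0 < κ →
      HasDerivAt (deriv (Wprofit γ σ)) (-(γ * σ * deriv Lam κ) / κ) κ ∧
      0 < -(γ * σ * deriv Lam κ) / κ) ∧
    ConvexOn ℝ (Set.Ioi 0) (Wprofit γ σ) ∧
    StrictAntiOn (Wprofit γ σ) (Set.Ioi 0) ∧
    Filter.Tendsto (Wprofit γ σ) Filter.atTop (nhds 0) := by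
  have hγσ : 0 < γ * σ := mul_pos hγ hσ
  exact ⟨fun κ hκ => ⟨hasDerivAt_Wprofit γ σ hκ, Wprofit_deriv_neg hγσ hκ⟩,
    fun κ hκ => ⟨hasDerivAt_deriv_Wprofit γ σ hκ, Wprofit_deriv2_pos hγσ hκ⟩,
    convexOn_Wprofit hγσ.le, strictAntiOn_Wprofit hγσ, tendsto_Wprofit_atTop γ σ⟩

end
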